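/- The Pauli group P_{1,2} is just nonabelian but not minimal nonabelian: P_{1,2} is nonabelian, for every nontrivial normal subgroup N of P_{1,2} the quotient P_{1,2}/N is abelian, and P_{1,2} possesses a proper subgroup that is nonabelian. -/

import Mathlib

open Matrix

/-- The shift matrix `X_k` on `n` qubits: `(X_k)_{u,v} = 1` if `u = v + e_k`, else `0`. -/
def shiftX2 (n : ℕ) (k : Fin n) :
    Matrix (Fin n → ZMod 2) (Fin n → ZMod 2) ℂ :=
  Matrix.of fun u v => if u = v + Pi.single k 1 then 1 else 0

/-- The clock matrix `Z_k` on `n` qubits: diagonal with `(Z_k)_{v,v} = (−1)^{(v k).val}`. -/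
def clockZ2 (n : ℕ) (k : Fin n) :
    Matrix (Fin n → ZMod 2) (Fin n → ZMod 2) ℂ :=
  Matrix.diagonal fun v => (-1 : ℂ) ^ (v k).val

/-- The Pauli group `P_{n,2}` on `n` qubits: the subgroup of the units of the matrix ring
generated by the scalar matrix `i·I` and the shift and clock matrices `X_k`, `Z_k`. -/
noncomputable def PauliGroup2 (n : ℕ) :
    Subgroup (Matrix (Fin n → ZMod 2) (Fin n → ZMod 2) ℂ)ˣ :=
  Subgroup.closure
    {u : (Matrix (Fin n → ZMod 2) (Fin n → ZMod 2) ℂ)ˣ |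
      (u : Matrix (Fin n → ZMod 2) (Fin n → ZMod 2) ℂ) = Complex.I • 1 ∨
      ∃ k : Fin n,
        (u : Matrix (Fin n → ZMod 2) (Fin n → ZMod 2) ℂ) = shiftX2 n k ∨
        (u : Matrix (Fin n → ZMod 2) (Fin n → ZMod 2) ℂ) = clockZ2 n k}

/-!
Any two elements of `P_{n,2}` commute or anticommute: the generators do (`Z_k X_k = -X_k Z_k`,
all other pairs commute), and the elements sign-commuting with a fixed element form a subgroup.
Hence every commutator is `±1`, and `P/N` is abelian as soon as `-1 ∈ N`. A nontrivial normal
subgroup `N` does contain `-1`: if some `g ∈ N` is not central, it anticommutes with some `t` and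
`g t g⁻¹ t⁻¹ = -1`; if `g` is central, it commutes with every `X_k` and `Z_k`, so it is a scalar
`c • 1` with `c² = ±1` (all squares in `P` are `±1`), whence `g = -1` or `g² = -1`.
The elements of `P` with real entries form a proper subgroup (it misses `i • 1`) that contains the
anticommuting pair `X_0`, `Z_0`.
-/

local notation "𝕄[" n "]" => Matrix (Fin n → ZMod 2) (Fin n → ZMod 2) ℂ

section SignCommute

variable {G : Type*}

def SignCommute [Mul G] [HasDistribNeg G] (a b : G) : Prop :=
  a * b = b * a ∨ a * b = -(b * a)

theorem SignCommute.symm [Mul G] [HasDistribNeg G] {a b : G} (h : SignCommute a b) :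
    SignCommute b a := by
  rcases h with h | h
  · exact .inl h.symm
  · exact .inr (by rw [h, neg_neg])

theorem Units.signCommute_of_val {R : Type*} [Monoid R] [HasDistribNeg R] {a b : Rˣ}
    (h : SignCommute (a : R) b) : SignCommute a b := by
  rcases h with h | h
  · exact .inl (Units.ext h)
  · exact .inr (Units.ext h)

variable [Group G] [HasDistribNeg G]

def signCentralizer (a : G) : Subgroup G where
  carrier := {b | SignCommute a b}
  one_mem' := .inl (by simp)
  mul_mem' := by
    rintro b c (hb | hb) (hc | hc) <;>
      simp only [Set.mem_ofPred_eq, SignCommute, ← mul_assoc, hb, neg_mul] <;>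
      simp only [mul_assoc, hc, mul_neg, neg_neg, true_or, or_true]
  inv_mem' := by
    rintro b (hb | hb)
    · exact .inl (Commute.inv_right hb)
    · refine .inr ?_
      calc a * b⁻¹ = -(b⁻¹ * -(b * a) * b⁻¹) := by simp
        _ = -(b⁻¹ * a) := by rw [← hb]; group

theorem SignCommute.of_mem_closure {S : Set G} (hS : ∀ a ∈ S, ∀ b ∈ S, SignCommute a b)
    {a b : G} (ha : a ∈ Subgroup.closure S) (hb : b ∈ Subgroup.closure S) :
    SignCommute a b := by
  have hSa : S ⊆ signCentralizer a := by
    intro s hs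
    exact (show SignCommute s a from
      (Subgroup.closure_le (signCentralizer s)).2 (hS s hs) ha).symm
  exact (Subgroup.closure_le _).2 hSa hb

theorem sq_eq_one_or_neg_one_of_mem_closure {S : Set G}
    (hS : ∀ a ∈ Subgroup.closure S, ∀ b ∈ Subgroup.closure S, SignCommute a b)
    (hsq : ∀ a ∈ S, a ^ 2 = 1 ∨ a ^ 2 = -1)
    {a : G} (ha : a ∈ Subgroup.closure S) : a ^ 2 = 1 ∨ a ^ 2 = -1 := by
  induction ha using Subgroup.closure_induction with
  | mem a ha => exact hsq a ha
  | one => exact .inl (one_pow 2)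
  | mul a b ha hb iha ihb =>
    have hab : (a * b) ^ 2 = a ^ 2 * b ^ 2 ∨ (a * b) ^ 2 = -(a ^ 2 * b ^ 2) := by
      simp only [sq, ← mul_assoc]
      rcases hS b hb a ha with h | h
      · exact .inl (by rw [mul_assoc a b, h, ← mul_assoc, mul_assoc a a])
      · exact .inr (by rw [mul_assoc a b, h, mul_neg, neg_mul, ← mul_assoc, mul_assoc a a])
    rcases hab with h | h <;> rcases iha with ha | ha <;> rcases ihb with hb | hb <;>
      simp [h, ha, hb]
  | inv a _ iha =>
    rw [inv_pow]
    rcases iha with h | h <;> simp [h]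

end SignCommute

section PauliMatrices

variable {n : ℕ}

theorem pi_zmod_two_add_self (v : Fin n → ZMod 2) : v + v = 0 :=
  funext fun i => CharTwo.add_self_eq_zero (v i)

theorem pi_zmod_two_eq_add_comm {u v w : Fin n → ZMod 2} : u = v + w ↔ v = u + w := by
  constructor <;> rintro rfl <;> rw [add_assoc, pi_zmod_two_add_self, add_zero]

theorem neg_one_pow_val_add_zmod_two {R : Type*} [Ring R] (a b : ZMod 2) :
    (-1 : R) ^ (a + b).val = (-1) ^ a.val * (-1) ^ b.val := by
  rw [ZMod.val_add, ← neg_one_pow_eq_pow_mod_two, pow_add]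

theorem neg_one_pow_val_eq_neg_of_ne {R : Type*} [Ring R] {a b : ZMod 2} (h : a ≠ b) :
    (-1 : R) ^ a.val = -(-1) ^ b.val := by
  obtain rfl : a = b + 1 := by revert a b; decide
  rw [neg_one_pow_val_add_zmod_two, ZMod.val_one, pow_one, mul_neg_one]

variable (k l : Fin n) (M : 𝕄[n]) (u v : Fin n → ZMod 2)

theorem shiftX2_apply :
    shiftX2 n k u v = if u = v + Pi.single k 1 then 1 else 0 := rfl

theorem shiftX2_mul_apply : (shiftX2 n k * M) u v = M (u + Pi.single k 1) v := by
  simp only [mul_apply, shiftX2, of_apply, ite_mul, one_mul, zero_mul, pi_zmod_two_eq_add_comm,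
    Finset.sum_ite_eq', Finset.mem_univ, if_true]

theorem mul_shiftX2_apply : (M * shiftX2 n k) u v = M u (v + Pi.single k 1) := by
  simp only [mul_apply, shiftX2, of_apply, mul_ite, mul_one, mul_zero, Finset.sum_ite_eq',
    Finset.mem_univ, if_true]

theorem clockZ2_mul_apply : (clockZ2 n k * M) u v = (-1) ^ (u k).val * M u v :=
  diagonal_mul _ _ _ _

theorem mul_clockZ2_apply : (M * clockZ2 n k) u v = M u v * (-1) ^ (v k).val :=
  mul_diagonal _ _ _ _

theorem shiftX2_mul_self : shiftX2 n k * shiftX2 n k = 1 := by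
  ext u v
  simp only [shiftX2_mul_apply, shiftX2_apply, one_apply, add_left_inj]

theorem clockZ2_mul_self : clockZ2 n k * clockZ2 n k = 1 := by
  rw [clockZ2, diagonal_mul_diagonal, ← diagonal_one]
  congr 1
  funext v
  rw [← pow_add, ← two_mul, pow_mul, neg_one_sq, one_pow]

theorem shiftX2_commute : Commute (shiftX2 n k) (shiftX2 n l) := by
  ext u v
  have key (a b : Fin n → ZMod 2) : u + a = v + b ↔ u + a + b = v := by
    rw [← add_left_inj b, add_assoc v, pi_zmod_two_add_self, add_zero]
  simp only [shiftX2_mul_apply, shiftX2_apply, key, add_right_comm u (Pi.single k 1)]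

theorem clockZ2_commute : Commute (clockZ2 n k) (clockZ2 n l) := by
  simp only [Commute, SemiconjBy, clockZ2, diagonal_mul_diagonal, mul_comm]

theorem clockZ2_mul_shiftX2 :
    clockZ2 n l * shiftX2 n k =
      (-1 : ℂ) ^ ((Pi.single k 1 : Fin n → ZMod 2) l).val • (shiftX2 n k * clockZ2 n l) := by
  ext u v
  rw [clockZ2_mul_apply, Matrix.smul_apply, mul_clockZ2_apply, shiftX2_apply]
  split_ifs with h
  · rw [h, Pi.add_apply, neg_one_pow_val_add_zmod_two, smul_eq_mul]
    ring
  · simp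

theorem clockZ2_mul_shiftX2_self : clockZ2 n k * shiftX2 n k = -(shiftX2 n k * clockZ2 n k) := by
  rw [clockZ2_mul_shiftX2, Pi.single_eq_same, ZMod.val_one, pow_one, neg_one_smul]

end PauliMatrices

section Commutant

variable {n : ℕ} {M : 𝕄[n]}

theorem apply_eq_zero_of_commute_clockZ2 {k : Fin n} (h : Commute (clockZ2 n k) M)
    {u v : Fin n → ZMod 2} (huv : u k ≠ v k) : M u v = 0 := by
  have := congrFun (congrFun h.eq u) v
  rw [clockZ2_mul_apply, mul_clockZ2_apply, neg_one_pow_val_eq_neg_of_ne huv] at this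
  have hs : (-1 : ℂ) ^ (v k).val ≠ 0 := pow_ne_zero _ (by norm_num)
  have : 2 * (-1 : ℂ) ^ (v k).val * M u v = 0 := by linear_combination -this
  simpa [hs] using this

theorem apply_add_single_of_commute_shiftX2 {k : Fin n} (h : Commute (shiftX2 n k) M)
    (u : Fin n → ZMod 2) : M (u + Pi.single k 1) (u + Pi.single k 1) = M u u := by
  have := congrFun (congrFun h.eq u) (u + Pi.single k 1)
  rwa [shiftX2_mul_apply, mul_shiftX2_apply, add_assoc, pi_zmod_two_add_self, add_zero] at this

theorem eq_smul_one_of_forall_commute (hX : ∀ k, Commute (shiftX2 n k) M)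
    (hZ : ∀ k, Commute (clockZ2 n k) M) : M = M 0 0 • 1 := by
  have hdiag (w : Fin n → ZMod 2) : ∀ u, M (u + w) (u + w) = M u u := by
    rw [← Finset.univ_sum_single w]
    refine Finset.sum_induction _ (fun w => ∀ u, M (u + w) (u + w) = M u u)
      (fun a b ha hb u => by rw [← add_assoc, hb (u + a), ha]) (fun u => by rw [add_zero])
      (fun i _ u => ?_)
    obtain h | h : w i = 0 ∨ w i = 1 := by generalize w i = x; revert x; decide
    · simp [h]
    · rw [h]
      exact apply_add_single_of_commute_shiftX2 (hX i) u
  ext u v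
  rw [Matrix.smul_apply, one_apply, smul_eq_mul]
  split_ifs with huv
  · rw [huv, mul_one, ← hdiag v 0, zero_add]
  · obtain ⟨k, hk⟩ := Function.ne_iff.1 huv
    rw [mul_zero, apply_eq_zero_of_commute_clockZ2 (hZ k) hk]

end Commutant

section RealUnits

variable (ι : Type*) [Fintype ι] [DecidableEq ι]

def realUnits : Subgroup (Matrix ι ι ℂ)ˣ :=
  (Units.map (RingHom.mapMatrix (starRingEnd ℂ)).toMonoidHom).eqLocus (MonoidHom.id _)

variable {ι}

theorem mem_realUnits {u : (Matrix ι ι ℂ)ˣ} :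
    u ∈ realUnits ι ↔ (u : Matrix ι ι ℂ).map (starRingEnd ℂ) = u :=
  Units.ext_iff

end RealUnits

section Generators

variable {n : ℕ}

theorem shiftX2_map_conj (k : Fin n) : (shiftX2 n k).map (starRingEnd ℂ) = shiftX2 n k := by
  ext u v
  simp [shiftX2_apply, apply_ite (starRingEnd ℂ)]

theorem clockZ2_map_conj (k : Fin n) : (clockZ2 n k).map (starRingEnd ℂ) = clockZ2 n k := by
  simp [clockZ2, diagonal_map]

theorem I_smul_one_map_conj_ne :
    (Complex.I • (1 : 𝕄[n])).map (starRingEnd ℂ) ≠ Complex.I • 1 := by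
  intro h
  have := congrFun (congrFun h 0) 0
  norm_num [Complex.ext_iff] at this

theorem signCommute_of_mem_generators {A B : 𝕄[n]}
    (hA : A = Complex.I • 1 ∨ ∃ k, A = shiftX2 n k ∨ A = clockZ2 n k)
    (hB : B = Complex.I • 1 ∨ ∃ k, B = shiftX2 n k ∨ B = clockZ2 n k) : SignCommute A B := by
  have hZX (k l : Fin n) : SignCommute (clockZ2 n l) (shiftX2 n k) := by
    rw [SignCommute, clockZ2_mul_shiftX2]
    generalize (Pi.single k 1 : Fin n → ZMod 2) l = a
    obtain rfl | rfl : a = 0 ∨ a = 1 := by revert a; decide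
    · exact .inl (by rw [ZMod.val_zero, pow_zero, one_smul])
    · exact .inr (by rw [ZMod.val_one, pow_one, neg_one_smul])
  have hI (C : 𝕄[n]) : SignCommute (Complex.I • 1) C := .inl ((Commute.one_left C).smul_left _).eq
  rcases hA with rfl | ⟨k, rfl | rfl⟩
  · exact hI B
  · rcases hB with rfl | ⟨l, rfl | rfl⟩
    · exact (hI _).symm
    · exact .inl (shiftX2_commute k l).eq
    · exact (hZX k l).symm
  · rcases hB with rfl | ⟨l, rfl | rfl⟩
    · exact (hI _).symm
    · exact hZX l k
    · exact .inl (clockZ2_commute k l).eq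

end Generators

namespace PauliGroup2

variable {n : ℕ}

theorem signCommute {a b : (𝕄[n])ˣ} (ha : a ∈ PauliGroup2 n) (hb : b ∈ PauliGroup2 n) :
    SignCommute a b :=
  SignCommute.of_mem_closure
    (fun _ hs _ ht => Units.signCommute_of_val (signCommute_of_mem_generators hs ht)) ha hb

theorem sq_eq_one_or_neg_one {a : (𝕄[n])ˣ} (ha : a ∈ PauliGroup2 n) : a ^ 2 = 1 ∨ a ^ 2 = -1 := by
  refine sq_eq_one_or_neg_one_of_mem_closure (fun _ ha _ hb => signCommute ha hb)
    (fun s hs => ?_) ha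
  simp only [Units.ext_iff, Units.val_pow_eq_pow_val, Units.val_one, Units.val_neg]
  rcases hs with h | ⟨k, h | h⟩ <;> rw [h, sq]
  · exact .inr (by simp [smul_smul])
  · exact .inl (shiftX2_mul_self k)
  · exact .inl (clockZ2_mul_self k)

noncomputable def shift (k : Fin n) : PauliGroup2 n :=
  ⟨⟨shiftX2 n k, shiftX2 n k, shiftX2_mul_self k, shiftX2_mul_self k⟩,
    Subgroup.subset_closure (.inr ⟨k, .inl rfl⟩)⟩

noncomputable def clock (k : Fin n) : PauliGroup2 n :=
  ⟨⟨clockZ2 n k, clockZ2 n k, clockZ2_mul_self k, clockZ2_mul_self k⟩,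
    Subgroup.subset_closure (.inr ⟨k, .inr rfl⟩)⟩

noncomputable def phase (n : ℕ) : PauliGroup2 n :=
  ⟨⟨Complex.I • 1, -Complex.I • 1, by simp [smul_smul], by simp [smul_smul]⟩,
    Subgroup.subset_closure (.inl rfl)⟩

noncomputable def negOne (n : ℕ) : PauliGroup2 n := phase n ^ 2

theorem coe_negOne : (negOne n : (𝕄[n])ˣ) = -1 := by
  ext : 1
  simp [negOne, phase, sq, smul_smul]

theorem mul_eq_or_eq_negOne_mul (g h : PauliGroup2 n) :
    g * h = h * g ∨ g * h = negOne n * (h * g) := by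
  rcases signCommute g.2 h.2 with e | e
  · exact .inl (Subtype.ext e)
  · refine .inr (Subtype.ext ?_)
    rw [Subgroup.coe_mul, e, Subgroup.coe_mul, Subgroup.coe_mul, coe_negOne, neg_one_mul]

theorem quotient_mul_comm {N : Subgroup (PauliGroup2 n)} [N.Normal] (hN : negOne n ∈ N)
    (x y : PauliGroup2 n ⧸ N) : x * y = y * x := by
  induction x using QuotientGroup.induction_on with | H g =>
  induction y using QuotientGroup.induction_on with | H h =>
  rw [← QuotientGroup.mk_mul, ← QuotientGroup.mk_mul]
  rcases mul_eq_or_eq_negOne_mul g h with e | e <;> rw [e]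
  rw [QuotientGroup.mk_mul, (QuotientGroup.eq_one_iff _).2 hN, one_mul]

theorem coe_eq_smul_one_of_mem_center {g : PauliGroup2 n} (hg : g ∈ Subgroup.center _) :
    ((g : (𝕄[n])ˣ) : 𝕄[n]) = ((g : (𝕄[n])ˣ) : 𝕄[n]) 0 0 • 1 := by
  have hcomm (t : PauliGroup2 n) : Commute ((t : (𝕄[n])ˣ) : 𝕄[n]) ((g : (𝕄[n])ˣ) : 𝕄[n]) :=
    congrArg (fun x : PauliGroup2 n => ((x : (𝕄[n])ˣ) : 𝕄[n])) (Subgroup.mem_center_iff.1 hg t)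
  exact eq_smul_one_of_forall_commute (fun k => hcomm (shift k)) (fun k => hcomm (clock k))

theorem eq_negOne_or_sq_eq_negOne {g : PauliGroup2 n} (hg : g ∈ Subgroup.center _)
    (hne : g ≠ 1) : g = negOne n ∨ g ^ 2 = negOne n := by
  rcases sq_eq_one_or_neg_one g.2 with h | h
  · obtain ⟨c, hc⟩ : ∃ c : ℂ, ((g : (𝕄[n])ˣ) : 𝕄[n]) = c • 1 :=
      ⟨_, coe_eq_smul_one_of_mem_center hg⟩
    have hc2 : c * c = 1 := by
      have h' : ((g : (𝕄[n])ˣ) : 𝕄[n]) ^ 2 = 1 := by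
        rw [← Units.val_pow_eq_pow_val, h, Units.val_one]
      rw [hc, smul_pow, one_pow] at h'
      simpa [sq] using congrFun (congrFun h' 0) 0
    rcases mul_self_eq_one_iff.1 hc2 with rfl | rfl
    · exact absurd (Subtype.ext (Units.ext (by rw [hc, one_smul]; rfl))) hne
    · exact .inl (Subtype.ext (Units.ext (by rw [hc, neg_one_smul, coe_negOne]; rfl)))
  · exact .inr (Subtype.ext (by rw [Subgroup.coe_pow, h, coe_negOne]))

theorem negOne_mem_of_ne_bot {N : Subgroup (PauliGroup2 n)} [hN : N.Normal] (hbot : N ≠ ⊥) :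
    negOne n ∈ N := by
  obtain ⟨⟨g, hgN⟩, hne⟩ := Subgroup.ne_bot_iff_exists_ne_one.1 hbot
  have hne' : g ≠ 1 := fun h => hne (Subtype.ext h)
  by_cases hc : g ∈ Subgroup.center _
  · rcases eq_negOne_or_sq_eq_negOne hc hne' with rfl | h
    · exact hgN
    · exact h ▸ pow_mem hgN 2
  · obtain ⟨t, ht⟩ : ∃ t, t * g ≠ g * t := by simpa [Subgroup.mem_center_iff] using hc
    rcases mul_eq_or_eq_negOne_mul g t with e | e
    · exact absurd e.symm ht
    · have : negOne n = g * (t * g⁻¹ * t⁻¹) := by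
        rw [← mul_assoc, ← mul_assoc, e]; group
      rw [this]
      exact mul_mem hgN (hN.conj_mem _ (inv_mem hgN) t)

theorem shift_mul_clock_ne (k : Fin n) : shift k * clock k ≠ clock k * shift k := by
  intro h
  have hXZ : shiftX2 n k * clockZ2 n k = 0 := by
    have h' : shiftX2 n k * clockZ2 n k = clockZ2 n k * shiftX2 n k :=
      congrArg (fun x : PauliGroup2 n => ((x : (𝕄[n])ˣ) : 𝕄[n])) h
    have : IsAddTorsionFree 𝕄[n] := inferInstanceAs (IsAddTorsionFree (_ → _ → ℂ))
    rwa [clockZ2_mul_shiftX2_self, self_eq_neg] at h'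
  exact ((shift k * clock k : PauliGroup2 n) : (𝕄[n])ˣ).ne_zero hXZ

theorem exists_ne_top_not_commute (k : Fin n) :
    ∃ H : Subgroup (PauliGroup2 n), H ≠ ⊤ ∧ ∃ a b : H, a * b ≠ b * a := by
  let H := (realUnits _).comap (PauliGroup2 n).subtype
  have hphase : phase n ∉ H := fun h => I_smul_one_map_conj_ne (mem_realUnits.1 h)
  have hshift : shift k ∈ H := mem_realUnits.2 (shiftX2_map_conj k)
  have hclock : clock k ∈ H := mem_realUnits.2 (clockZ2_map_conj k)
  exact ⟨H, fun hH => hphase (hH ▸ Subgroup.mem_top _), ⟨_, hshift⟩, ⟨_, hclock⟩,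
    fun h => shift_mul_clock_ne k (congrArg Subtype.val h)⟩

end PauliGroup2

/-- `P_{1,2}` is just nonabelian but not minimal nonabelian: it is
nonabelian, every quotient by a nontrivial normal subgroup is abelian, and it has a proper
nonabelian subgroup. -/
theorem pauli_one_two_just_nonabelian_not_minimal :
    (∃ a b : ↥(PauliGroup2 1), a * b ≠ b * a) ∧
    (∀ (N : Subgroup ↥(PauliGroup2 1)) [N.Normal], N ≠ ⊥ →
      ∀ x y : ↥(PauliGroup2 1) ⧸ N, x * y = y * x) ∧
    (∃ H : Subgroup ↥(PauliGroup2 1), H ≠ ⊤ ∧ ∃ a b : ↥H, a * b ≠ b * a) :=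
  ⟨⟨PauliGroup2.shift 0, PauliGroup2.clock 0, PauliGroup2.shift_mul_clock_ne 0⟩,
    fun _ _ hN => PauliGroup2.quotient_mul_comm (PauliGroup2.negOne_mem_of_ne_bot hN),
    PauliGroup2.exists_ne_top_not_commute 0⟩
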